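/- Fix δ ∈ (0,1/2] and α > 0. Let Z^n be a string of n i.i.d. Bernoulli(δ) bits and let G be a guessing function for the distribution of Z^n. Then lim_{n→∞} (1/n) log₂ E[G(Z^n)^α] = α·H_{1/(1+α)}(δ). Consequently, if X^n is uniform on {0,1}^n and Y^n is the output of X^n through a binary symmetric channel with crossover probability δ, the conditional guesswork satisfies lim_{n→∞} (1/n) log₂ E[G(X^n|Y^n)^α] = α·H_{1/(1+α)}(δ). -/

import Mathlib

/-!
Arikan's bounds pin the `α`-th moment of a guessing function of a distribution `q` on a finite
set `S` between `(∑ q^β)^(1+α) / (1 + ln |S|)^α` and `(∑ q^β)^(1+α)`, where `β = 1/(1+α)`: the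
upper bound because only elements `y` with `q y ≥ q x` are guessed no later than `x`, so
`G x ≤ ∑_y (q y / q x)^β`; the lower bound by Hölder's inequality with weights `1/G` together
with `∑ 1/G ≤ 1 + ln |S|`. For `n` i.i.d. Bernoulli(`δ`) bits, `∑ q^β = (δ^β + (1-δ)^β)^n` and
`ln |S| = n ln 2` is subexponential, which gives the limit. Given the BSC output `y`, xoring with
`y` maps the posterior of `X^n` to a positive multiple of the noise law, so the conditional
moment is an average over `y` of Bernoulli moments that obey the same bounds.
-/

open Real Filter Finset

/-- Binary Rényi entropy of order `β` (base-2 logarithm). -/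
noncomputable def Hb (β p : ℝ) : ℝ := (1 / (1 - β)) * Real.logb 2 (p ^ β + (1 - p) ^ β)

/-- Binary KL divergence `D(p‖q)` in bits (Lean's `logb 2 0 = 0` gives the `0·log 0 = 0` convention). -/
noncomputable def Dkl (p q : ℝ) : ℝ :=
  p * Real.logb 2 (p / q) + (1 - p) * Real.logb 2 ((1 - p) / (1 - q))

/-- Binary Shannon entropy in bits. -/
noncomputable def binEnt (p : ℝ) : ℝ := -(p * Real.logb 2 p) - (1 - p) * Real.logb 2 (1 - p)

/-- `G` is a guessing function for the distribution `q` on the finite set `S`: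
a bijection onto `{1, …, |S|}` ranking more likely elements first. -/
def IsGuessingFunction {S : Type*} [Fintype S] (q : S → ℝ) (G : S → ℕ) : Prop :=
  Function.Injective G ∧ (∀ x, G x ∈ Finset.Icc 1 (Fintype.card S)) ∧
    ∀ x y, q y < q x → G x < G y

/-- Distribution of `n` i.i.d. Bernoulli(`p`) bits (`true` has probability `p`). -/
noncomputable def bernDist (p : ℝ) (n : ℕ) (x : Fin n → Bool) : ℝ :=
  ∏ i, if x i then p else 1 - p

/-- Joint distribution of a uniform `X^n` and the outputs `Y' = (Y₍₁₎,…,Y₍ₘ₎)` of `m`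
independent BSC(`δ`) channels applied to `X^n`. -/
noncomputable def bscJoint (δ : ℝ) (m n : ℕ) (x : Fin n → Bool)
    (y : Fin m → Fin n → Bool) : ℝ :=
  ((1 : ℝ) / 2) ^ n * ∏ j, ∏ i, (if y j i = x i then 1 - δ else δ)

/-- Conditional distribution of `X^n` given `Y' = y` for `m` independent BSC(`δ`) channels. -/
noncomputable def bscCond (δ : ℝ) (m n : ℕ) (y : Fin m → Fin n → Bool)
    (x : Fin n → Bool) : ℝ :=
  bscJoint δ m n x y / ∑ x', bscJoint δ m n x' y

/-- Joint distribution of a uniform `X^n` and the output of a single BSC(`δ`). -/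
noncomputable def bscJoint1 (δ : ℝ) (n : ℕ) (x y : Fin n → Bool) : ℝ :=
  ((1 : ℝ) / 2) ^ n * ∏ i, (if y i = x i then 1 - δ else δ)

/-- Conditional distribution of `X^n` given the output `y` of a single BSC(`δ`). -/
noncomputable def bscCond1 (δ : ℝ) (n : ℕ) (y x : Fin n → Bool) : ℝ :=
  bscJoint1 δ n x y / ∑ x', bscJoint1 δ n x' y

open scoped BigOperators

noncomputable def guessMoment {S : Type*} [Fintype S] (q : S → ℝ) (G : S → ℕ) (α : ℝ) : ℝ :=
  ∑ x, q x * (G x : ℝ) ^ α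

namespace IsGuessingFunction

variable {S : Type*} [Fintype S] {q : S → ℝ} {G : S → ℕ} {α : ℝ}

lemma image_eq (hG : IsGuessingFunction q G) : univ.image G = Icc 1 (Fintype.card S) := by
  refine eq_of_subset_of_card_le (fun k hk => ?_) ?_
  · obtain ⟨x, -, rfl⟩ := mem_image.mp hk
    exact hG.2.1 x
  · rw [card_image_of_injective _ hG.1, card_univ, Nat.card_Icc, Nat.add_sub_cancel]

lemma one_le (hG : IsGuessingFunction q G) (x : S) : 1 ≤ G x := (mem_Icc.mp (hG.2.1 x)).1

lemma le_card_filter_le (hG : IsGuessingFunction q G) (x : S) :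
    G x ≤ #{y | q x ≤ q y} := by
  have hsub : Icc 1 (G x) ⊆ ({y | q x ≤ q y} : Finset S).image G := by
    intro k hk
    have hk' : k ∈ univ.image G := by
      rw [hG.image_eq]
      exact mem_Icc.mpr ⟨(mem_Icc.mp hk).1, (mem_Icc.mp hk).2.trans (mem_Icc.mp (hG.2.1 x)).2⟩
    obtain ⟨y, -, rfl⟩ := mem_image.mp hk'
    refine mem_image_of_mem G (mem_filter.mpr ⟨mem_univ y, not_lt.mp fun hyx => ?_⟩)
    exact absurd (mem_Icc.mp hk).2 (not_le.mpr (hG.2.2 x y hyx))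
  calc G x = #(Icc 1 (G x)) := by rw [Nat.card_Icc, Nat.add_sub_cancel]
    _ ≤ _ := card_le_card hsub
    _ ≤ _ := card_image_le

lemma comp_equiv {T : Type*} [Fintype T] {p : T → ℝ} (hG : IsGuessingFunction q G) (e : T ≃ S)
    (hpq : ∀ a b, p a < p b → q (e a) < q (e b)) : IsGuessingFunction p (G ∘ e) :=
  ⟨hG.1.comp e.injective, fun a => Fintype.card_congr e ▸ hG.2.1 (e a),
    fun a b h => hG.2.2 _ _ (hpq b a h)⟩

lemma sum_inv_le (hG : IsGuessingFunction q G) :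
    ∑ x, (G x : ℝ)⁻¹ ≤ 1 + Real.log (Fintype.card S) := by
  have harmonic_le := harmonic_le_one_add_log (Fintype.card S)
  rw [harmonic_eq_sum_Icc, ← hG.image_eq, sum_image fun a _ b _ h => hG.1 h] at harmonic_le
  push_cast at harmonic_le
  exact harmonic_le

lemma le_sum_rpow_div (hq : ∀ y, 0 ≤ q y) (hG : IsGuessingFunction q G) {β : ℝ} (hβ : 0 ≤ β)
    {x : S} (hx : 0 < q x) : (G x : ℝ) ≤ (∑ y, q y ^ β) / q x ^ β := by
  rw [le_div_iff₀ (rpow_pos_of_pos hx β)]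
  calc (G x : ℝ) * q x ^ β ≤ #{y | q x ≤ q y} * q x ^ β := by
        gcongr; exact_mod_cast hG.le_card_filter_le x
    _ = ∑ y ∈ {y | q x ≤ q y}, q x ^ β := by rw [sum_const, nsmul_eq_mul]
    _ ≤ ∑ y ∈ {y | q x ≤ q y}, q y ^ β :=
        sum_le_sum fun y hy => rpow_le_rpow hx.le (mem_filter.mp hy).2 hβ
    _ ≤ ∑ y, q y ^ β :=
        sum_le_sum_of_subset_of_nonneg (filter_subset _ _) fun y _ _ => rpow_nonneg (hq y) β

theorem guessMoment_le (hq : ∀ x, 0 ≤ q x) (hG : IsGuessingFunction q G) (hα : 0 < α) :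
    guessMoment q G α ≤ (∑ x, q x ^ (1 / (1 + α))) ^ (1 + α) := by
  set β := 1 / (1 + α) with hβ_def
  set T := ∑ x, q x ^ β
  have hβ : 0 < β := by positivity
  have hT : 0 ≤ T := sum_nonneg fun x _ => rpow_nonneg (hq x) β
  have hterm (x : S) : q x * (G x : ℝ) ^ α ≤ T ^ α * q x ^ β := by
    rcases (hq x).eq_or_lt with hx | hx
    · rw [← hx, zero_rpow hβ.ne', zero_mul, mul_zero]
    have hsplit : q x ^ β * q x ^ (β * α) = q x := by
      rw [← rpow_add hx, ← mul_one_add, hβ_def, one_div_mul_cancel (by positivity), rpow_one]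
    calc q x * (G x : ℝ) ^ α ≤ q x * (T / q x ^ β) ^ α := by
          gcongr; exact hG.le_sum_rpow_div hq hβ.le hx
      _ = T ^ α * q x ^ β := by
          rw [div_rpow hT (rpow_nonneg hx.le β), ← rpow_mul hx.le]
          nth_rewrite 1 [← hsplit]
          field_simp
  calc guessMoment q G α ≤ ∑ x, T ^ α * q x ^ β := sum_le_sum fun x _ => hterm x
    _ = T ^ (1 + α) := by rw [← mul_sum, add_comm, rpow_add_one' hT (by positivity)]

theorem le_guessMoment (hq : ∀ x, 0 ≤ q x) (hG : IsGuessingFunction q G) (hα : 0 < α) :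
    (∑ x, q x ^ (1 / (1 + α))) ^ (1 + α) ≤
      (1 + Real.log (Fintype.card S)) ^ α * guessMoment q G α := by
  set β := 1 / (1 + α) with hβ_def
  set H := ∑ x, (G x : ℝ)⁻¹
  set E := guessMoment q G α
  have hG_pos (x : S) : (0 : ℝ) < G x := by exact_mod_cast hG.one_le x
  have hH : 0 ≤ H := sum_nonneg fun x _ => (inv_pos.mpr (hG_pos x)).le
  have hE : 0 ≤ E := sum_nonneg fun x _ => mul_nonneg (hq x) (rpow_nonneg (hG_pos x).le α)
  have hβα : β * (1 + α) = 1 := by rw [hβ_def, one_div_mul_cancel (by positivity)]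
  -- weighted Hölder with weights `1 / G x` applied to `q x ^ β * G x`, exponent `1 + α`
  have holder := inner_le_weight_mul_Lp_of_nonneg univ (p := 1 + α) (by linarith)
    (fun x => (G x : ℝ)⁻¹) (fun x => q x ^ β * G x) (fun x => (inv_pos.mpr (hG_pos x)).le)
    (fun x => mul_nonneg (rpow_nonneg (hq x) β) (hG_pos x).le)
  have hw_f (x : S) : (G x : ℝ)⁻¹ * (q x ^ β * G x) = q x ^ β := by
    field_simp [(hG_pos x).ne']
  have hw_fp (x : S) : (G x : ℝ)⁻¹ * (q x ^ β * G x) ^ (1 + α) = q x * (G x : ℝ) ^ α := by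
    rw [mul_rpow (rpow_nonneg (hq x) β) (hG_pos x).le, ← rpow_mul (hq x), hβα, rpow_one,
      rpow_one_add' (hG_pos x).le (by positivity)]
    field_simp [(hG_pos x).ne']
  simp only [hw_f, hw_fp] at holder
  calc (∑ x, q x ^ β) ^ (1 + α) ≤ (H ^ (1 - (1 + α)⁻¹) * E ^ (1 + α)⁻¹) ^ (1 + α) := by
        gcongr
        · exact sum_nonneg fun x _ => rpow_nonneg (hq x) β
        · exact holder
    _ = H ^ α * E := by
        rw [mul_rpow (rpow_nonneg hH _) (rpow_nonneg hE _), ← rpow_mul hH, ← rpow_mul hE,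
          inv_mul_cancel₀ (by positivity), rpow_one]
        congr 2
        field_simp
        ring
    _ ≤ (1 + Real.log (Fintype.card S)) ^ α * E := by
        gcongr; exact hG.sum_inv_le

end IsGuessingFunction

lemma tendsto_log_one_add_mul_div_atTop {c : ℝ} (hc : 0 < c) :
    Tendsto (fun n : ℕ => Real.log (1 + n * c) / n) atTop (nhds 0) := by
  have hlin : Tendsto (fun n : ℕ => 1 + n * c) atTop atTop :=
    tendsto_atTop_add_const_left _ _ (tendsto_natCast_atTop_atTop.atTop_mul_const hc)
  refine ((tendsto_pow_log_div_mul_add_atTop c⁻¹ (-c⁻¹) 1 (by positivity)).comp hlin).congr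
    fun n => ?_
  simp only [Function.comp_apply, pow_one]
  congr 1
  field_simp
  ring

lemma tendsto_inv_mul_logb_of_le_of_le {A f : ℕ → ℝ} {r : ℝ} (hr : 0 < r) (hf : ∀ n, 0 < f n)
    (hf_sub : Tendsto (fun n : ℕ => Real.log (f n) / n) atTop (nhds 0))
    (hup : ∀ n, A n ≤ r ^ n) (hlo : ∀ n, r ^ n ≤ f n * A n) :
    Tendsto (fun n : ℕ => 1 / (n : ℝ) * logb 2 (A n)) atTop (nhds (logb 2 r)) := by
  have hA (n : ℕ) : 0 < A n := pos_of_mul_pos_right ((pow_pos hr n).trans_le (hlo n)) (hf n).le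
  have hlower : Tendsto (fun n : ℕ => logb 2 r - Real.log (f n) / n / Real.log 2) atTop
      (nhds (logb 2 r)) := by
    simpa using (hf_sub.div_const (Real.log 2)).const_sub (logb 2 r)
  refine tendsto_of_tendsto_of_tendsto_of_le_of_le' hlower tendsto_const_nhds ?_ ?_ <;>
    filter_upwards [eventually_gt_atTop 0] with n hn <;>
    have hn' : (0 : ℝ) < n := Nat.cast_pos.mpr hn
  · have h := logb_le_logb_of_le one_lt_two (pow_pos hr n) (hlo n)
    rw [logb_pow, logb_mul (hf n).ne' (hA n).ne'] at h
    have hrw : logb 2 r - Real.log (f n) / n / Real.log 2 =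
        (n * logb 2 r - logb 2 (f n)) / n := by
      rw [div_right_comm, log_div_log]; field_simp
    rw [hrw, one_div_mul_eq_div]
    exact div_le_div_of_nonneg_right (by linarith) hn'.le
  · have h := logb_le_logb_of_le one_lt_two (hA n) (hup n)
    rw [logb_pow] at h
    rw [one_div_mul_eq_div, div_le_iff₀ hn']
    linarith

lemma expect_le_and_le {ι : Type*} [Fintype ι] [Nonempty ι] {M : ι → ℝ} {a c : ℝ}
    (h : ∀ i, M i ≤ a ∧ a ≤ c * M i) : 𝔼 i, M i ≤ a ∧ a ≤ c * 𝔼 i, M i := by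
  rw [mul_expect]
  exact ⟨expect_le univ_nonempty fun i _ => (h i).1, le_expect univ_nonempty fun i _ => (h i).2⟩

lemma bernDist_pos {δ : ℝ} (h0 : 0 < δ) (h1 : δ < 1) (n : ℕ) (z : Fin n → Bool) :
    0 < bernDist δ n z :=
  prod_pos fun i _ => by split <;> linarith

lemma sum_bernDist_rpow {δ : ℝ} (h0 : 0 ≤ δ) (h1 : δ ≤ 1) (β : ℝ) (n : ℕ) :
    ∑ z, bernDist δ n z ^ β = (δ ^ β + (1 - δ) ^ β) ^ n := by
  have hfactor (z : Fin n → Bool) :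
      bernDist δ n z ^ β = ∏ i, if z i then δ ^ β else (1 - δ) ^ β := by
    rw [bernDist, ← finsetProd_rpow _ _ fun i _ => by split <;> linarith]
    exact prod_congr rfl fun i _ => by split <;> rfl
  simp_rw [hfactor]
  rw [← Fintype.prod_sum fun (_ : Fin n) (b : Bool) => if b then δ ^ β else (1 - δ) ^ β]
  simp

noncomputable def guessworkGrowth (α δ : ℝ) : ℝ :=
  (δ ^ (1 / (1 + α)) + (1 - δ) ^ (1 / (1 + α))) ^ (1 + α)

section Bernoulli

variable {δ α : ℝ} {n : ℕ}

lemma rpow_add_rpow_one_sub_pos (h0 : 0 < δ) (h1 : δ < 1) (β : ℝ) :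
    0 < δ ^ β + (1 - δ) ^ β := by
  have := rpow_pos_of_pos h0 β
  have := rpow_pos_of_pos (sub_pos.mpr h1) β
  positivity

lemma guessworkGrowth_pos (h0 : 0 < δ) (h1 : δ < 1) : 0 < guessworkGrowth α δ :=
  rpow_pos_of_pos (rpow_add_rpow_one_sub_pos h0 h1 _) _

lemma logb_guessworkGrowth (h0 : 0 < δ) (h1 : δ < 1) (hα : 0 < α) :
    logb 2 (guessworkGrowth α δ) = α * Hb (1 / (1 + α)) δ := by
  rw [guessworkGrowth, logb_rpow_eq_mul_logb_of_pos (rpow_add_rpow_one_sub_pos h0 h1 _), Hb,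
    ← mul_assoc]
  congr 1
  rw [one_sub_div (by positivity), add_sub_cancel_left, one_div_div]
  field_simp

lemma IsGuessingFunction.bernDist_guessMoment_bounds (h0 : 0 < δ) (h1 : δ < 1) (hα : 0 < α)
    {g : (Fin n → Bool) → ℕ} (hg : IsGuessingFunction (bernDist δ n) g) :
    guessMoment (bernDist δ n) g α ≤ guessworkGrowth α δ ^ n ∧
      guessworkGrowth α δ ^ n ≤ (1 + n * Real.log 2) ^ α * guessMoment (bernDist δ n) g α := by
  have hq (z : Fin n → Bool) := (bernDist_pos h0 h1 n z).le
  have hsum : (∑ z, bernDist δ n z ^ (1 / (1 + α))) ^ (1 + α) = guessworkGrowth α δ ^ n := by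
    rw [sum_bernDist_rpow h0.le h1.le, guessworkGrowth,
      rpow_pow_comm (rpow_add_rpow_one_sub_pos h0 h1 _).le]
  have hcard : Real.log (Fintype.card (Fin n → Bool)) = n * Real.log 2 := by
    simp [Real.log_pow]
  exact ⟨hsum ▸ hg.guessMoment_le hq hα, hsum ▸ hcard ▸ hg.le_guessMoment hq hα⟩

end Bernoulli

def xorPerm {ι : Type*} (y : ι → Bool) : Equiv.Perm (ι → Bool) :=
  Function.Involutive.toPerm (fun z i => xor (z i) (y i)) fun z => funext fun i => by simp

@[simp]
lemma xorPerm_apply {ι : Type*} (y z : ι → Bool) (i : ι) : xorPerm y z i = xor (z i) (y i) := rfl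

section BSC

variable {δ α : ℝ} {n : ℕ}

lemma bscJoint1_xorPerm (y z : Fin n → Bool) :
    bscJoint1 δ n (xorPerm y z) y = (1 / 2) ^ n * bernDist δ n z := by
  rw [bscJoint1, bernDist]
  congr 1
  refine prod_congr rfl fun i _ => ?_
  rw [xorPerm_apply]
  cases z i <;> cases y i <;> simp

lemma IsGuessingFunction.comp_xorPerm (h0 : 0 < δ) (h1 : δ < 1) {y : Fin n → Bool}
    {g : (Fin n → Bool) → ℕ} (hg : IsGuessingFunction (bscCond1 δ n y) g) :
    IsGuessingFunction (bernDist δ n) (g ∘ xorPerm y) := by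
  have hD : 0 < ∑ x, bscJoint1 δ n x y :=
    sum_pos (fun x _ => mul_pos (by positivity) (prod_pos fun i _ => by split <;> linarith))
      univ_nonempty
  refine hg.comp_equiv (xorPerm y) fun a b hab => ?_
  simp only [bscCond1, bscJoint1_xorPerm]
  gcongr

lemma sum_sum_bscJoint1_eq_expect (G : (Fin n → Bool) → (Fin n → Bool) → ℕ) :
    ∑ y, ∑ x, bscJoint1 δ n x y * (G y x : ℝ) ^ α =
      𝔼 y, guessMoment (bernDist δ n) (G y ∘ xorPerm y) α := by
  rw [expect_eq_sum_div_card, card_univ, sum_div]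
  refine sum_congr rfl fun y _ => ?_
  rw [← Equiv.sum_comp (xorPerm y)]
  simp only [bscJoint1_xorPerm, guessMoment, Function.comp_apply, mul_assoc, ← mul_sum]
  rw [Fintype.card_fun, Fintype.card_bool, Fintype.card_fin, Nat.cast_pow, Nat.cast_ofNat,
    one_div, inv_pow, div_eq_inv_mul]

end BSC

/-- the guesswork exponent of an i.i.d. Bernoulli(`δ`) string is
`α·H_{1/(1+α)}(δ)`; consequently, the conditional guesswork exponent of a uniform `X^n`
given BSC(`δ`) side information is also `α·H_{1/(1+α)}(δ)`. -/
theorem bsc_single_agent_guesswork_exponent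
    (δ : ℝ) (hδ : δ ∈ Set.Ioc (0 : ℝ) (1 / 2)) (α : ℝ) (hα : 0 < α)
    (G : ∀ n, (Fin n → Bool) → ℕ)
    (hG : ∀ n, IsGuessingFunction (bernDist δ n) (G n))
    (G' : ∀ n, (Fin n → Bool) → (Fin n → Bool) → ℕ)
    (hG' : ∀ n y, IsGuessingFunction (bscCond1 δ n y) (G' n y)) :
    Tendsto
      (fun n : ℕ => (1 / (n : ℝ)) *
        Real.logb 2 (∑ z : Fin n → Bool, bernDist δ n z * (G n z : ℝ) ^ α))
      atTop (nhds (α * Hb (1 / (1 + α)) δ)) ∧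
    Tendsto
      (fun n : ℕ => (1 / (n : ℝ)) *
        Real.logb 2 (∑ y : Fin n → Bool, ∑ x : Fin n → Bool,
          bscJoint1 δ n x y * (G' n y x : ℝ) ^ α))
      atTop (nhds (α * Hb (1 / (1 + α)) δ)) := by
  obtain ⟨h0, hδ_half⟩ := hδ
  have h1 : δ < 1 := by linarith
  have hlog_sub : Tendsto (fun n : ℕ => Real.log ((1 + n * Real.log 2) ^ α) / n) atTop
      (nhds 0) := by
    have := (tendsto_log_one_add_mul_div_atTop (log_pos one_lt_two)).const_mul α
    rw [mul_zero] at this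
    refine this.congr fun n => ?_
    rw [log_rpow (by positivity), mul_div_assoc]
  have hrate (A : ℕ → ℝ) (hA : ∀ n, A n ≤ guessworkGrowth α δ ^ n ∧
      guessworkGrowth α δ ^ n ≤ (1 + n * Real.log 2) ^ α * A n) :
      Tendsto (fun n : ℕ => 1 / (n : ℝ) * logb 2 (A n)) atTop
        (nhds (α * Hb (1 / (1 + α)) δ)) :=
    logb_guessworkGrowth h0 h1 hα ▸ tendsto_inv_mul_logb_of_le_of_le (guessworkGrowth_pos h0 h1)
      (fun n => by positivity) hlog_sub (fun n => (hA n).1) (fun n => (hA n).2)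
  refine ⟨hrate _ fun n => (hG n).bernDist_guessMoment_bounds h0 h1 hα, hrate _ fun n => ?_⟩
  rw [sum_sum_bscJoint1_eq_expect]
  exact expect_le_and_le fun y =>
    ((hG' n y).comp_xorPerm h0 h1).bernDist_guessMoment_bounds h0 h1 hα
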